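/- Let H be a complex Hilbert space, let {P_a}_{a=1}^c and {Q_b}_{b=1}^c be PVMs with c outputs in M_n(B(H)) whose entries commute (P_{a,ij} Q_{b,kl} = Q_{b,kl} P_{a,ij} for all indices), and let ψ ∈ H be a unit vector such that Σ_{i,j=1}^n ⟨P_{a,ij} Q_{b,ij} ψ, ψ⟩ = 0 for all a ≠ b. Then the vector state ρ(T) = ⟨T ψ, ψ⟩ is tracial on the *-subalgebra of B(H) generated by the entries {P_{a,ij} : 1 ≤ a ≤ c, 1 ≤ i,j ≤ n}; that is, ⟨xy ψ, ψ⟩ = ⟨yx ψ, ψ⟩ for all x, y in the *-subalgebra of B(H) generated by these entries. -/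

import Mathlib

/-!
Summing the PVM relations gives `∑ ‖P_{a,ik} ψ‖² = ∑ ‖Q_{a,ki} ψ‖² = n ‖ψ‖²`, while synchronicity
turns `∑ ⟪P_{a,ik} ψ, Q_{a,ki} ψ⟫` into the sum of the whole correlation, which is `n ‖ψ‖²` as well;
hence `P_{a,ik} ψ = Q_{a,ki} ψ`. Every `x` in the *-algebra generated by the `P`-entries commutes
with the `Q`-entries, so moving `P_{a,ij}` across `ψ` and back as a `Q`-entry gives
`⟪ψ, x P_{a,ij} ψ⟫ = ⟪ψ, P_{a,ij} x ψ⟫`. Traciality on generators propagates to the *-algebra.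
-/

open scoped ENNReal

set_option synthInstance.maxHeartbeats 1000000
set_option maxHeartbeats 1000000

noncomputable section

instance piLpCompleteSpace {ι : Type*} (p : ℝ≥0∞) (β : ι → Type*)
    [∀ i, UniformSpace (β i)] [∀ i, CompleteSpace (β i)] : CompleteSpace (PiLp p β) :=
  (PiLp.uniformEquiv p β).completeSpace_iff.2 inferInstance

/-- The isometric embedding of `E` onto the `i`-th coordinate of the
ℓ²-direct sum of `n` copies of `E`. -/
def inclPi (E : Type*) [NormedAddCommGroup E] [InnerProductSpace ℂ E]
    (n : ℕ) (i : Fin n) : E →L[ℂ] PiLp 2 (fun _ : Fin n => E) :=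
  (PiLp.continuousLinearEquiv 2 ℂ (fun _ : Fin n => E)).symm.toContinuousLinearMap.comp
    (ContinuousLinearMap.pi fun j => if j = i then ContinuousLinearMap.id ℂ E else 0)

/-- The continuous linear projection onto the `i`-th coordinate of the
ℓ²-direct sum of `n` copies of `E`. -/
def projPi (E : Type*) [NormedAddCommGroup E] [InnerProductSpace ℂ E]
    (n : ℕ) (i : Fin n) : PiLp 2 (fun _ : Fin n => E) →L[ℂ] E :=
  (ContinuousLinearMap.proj i).comp
    (PiLp.continuousLinearEquiv 2 ℂ (fun _ : Fin n => E)).toContinuousLinearMap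

/-- The operator on the ℓ²-direct sum `E^n` associated to an `n × n` matrix of bounded
operators on `E`, acting by `(T ξ) i = ∑ j, T i j (ξ j)`. -/
def matToOp {E : Type*} [NormedAddCommGroup E] [InnerProductSpace ℂ E] {n : ℕ}
    (T : Matrix (Fin n) (Fin n) (E →L[ℂ] E)) :
    PiLp 2 (fun _ : Fin n => E) →L[ℂ] PiLp 2 (fun _ : Fin n => E) :=
  ∑ i, ∑ j, (inclPi E n i).comp ((T i j).comp (projPi E n j))

open scoped InnerProductSpace

section MatToOp

variable {E : Type*} [NormedAddCommGroup E] [InnerProductSpace ℂ E] {n : ℕ}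

lemma inclPi_apply (i k : Fin n) (x : E) : inclPi E n i x k = if k = i then x else 0 := by
  simp [inclPi, apply_ite (fun f : E →L[ℂ] E => f x)]

lemma matToOp_apply (T : Matrix (Fin n) (Fin n) (E →L[ℂ] E)) (ξ : PiLp 2 (fun _ : Fin n => E))
    (i : Fin n) : matToOp T ξ i = ∑ j, T i j (ξ j) := by
  simp only [matToOp, _root_.sum_apply, WithLp.ofLp_sum, Finset.sum_apply,
    ContinuousLinearMap.comp_apply, inclPi_apply]
  rw [Finset.sum_comm]
  simp [projPi]

lemma matToOp_apply_inclPi (T : Matrix (Fin n) (Fin n) (E →L[ℂ] E)) (i k : Fin n) (x : E) :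
    matToOp T (inclPi E n k x) i = T i k x := by
  simp [matToOp_apply, inclPi_apply, apply_ite]

lemma matToOp_injective : Function.Injective (matToOp (E := E) (n := n)) := by
  intro T U h
  ext i k x
  rw [← matToOp_apply_inclPi, h, matToOp_apply_inclPi]

lemma matToOp_mul (T U : Matrix (Fin n) (Fin n) (E →L[ℂ] E)) :
    matToOp (T * U) = matToOp T * matToOp U := by
  ext ξ i
  simp only [matToOp_apply, mul_apply_eq_comp, Matrix.mul_apply,
    _root_.sum_apply, map_sum]
  exact Finset.sum_comm

lemma matToOp_one : matToOp (1 : Matrix (Fin n) (Fin n) (E →L[ℂ] E)) = 1 := by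
  ext ξ i
  simp [matToOp_apply, Matrix.one_apply, ite_apply,
    apply_ite (DFunLike.coe : (E →L[ℂ] E) → E → E)]

lemma matToOp_sum {ι : Type*} (s : Finset ι) (T : ι → Matrix (Fin n) (Fin n) (E →L[ℂ] E)) :
    matToOp (∑ a ∈ s, T a) = ∑ a ∈ s, matToOp (T a) := by
  ext ξ i
  simp only [matToOp_apply, _root_.sum_apply, WithLp.ofLp_sum, Finset.sum_apply,
    Matrix.sum_apply]
  exact Finset.sum_comm

lemma matToOp_star [CompleteSpace E] (T : Matrix (Fin n) (Fin n) (E →L[ℂ] E)) :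
    matToOp (star T) = star (matToOp T) := by
  rw [ContinuousLinearMap.star_eq_adjoint, ContinuousLinearMap.eq_adjoint_iff]
  intro ξ η
  simp only [PiLp.inner_apply, matToOp_apply, Matrix.star_apply, sum_inner, inner_sum,
    ContinuousLinearMap.star_eq_adjoint, ContinuousLinearMap.adjoint_inner_left]
  exact Finset.sum_comm

end MatToOp

structure IsPVM {κ A : Type*} [Fintype κ] [Semiring A] [Star A] (P : κ → A) : Prop where
  isStarProjection : ∀ a, IsStarProjection (P a)
  sum_eq_one : ∑ a, P a = 1

lemma IsPVM.of_matToOp {E : Type*} [NormedAddCommGroup E] [InnerProductSpace ℂ E]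
    [CompleteSpace E] {n c : ℕ} {P : Fin c → Matrix (Fin n) (Fin n) (E →L[ℂ] E)}
    (hadj : ∀ a, IsSelfAdjoint (matToOp (P a)))
    (hidem : ∀ a, (matToOp (P a)).comp (matToOp (P a)) = matToOp (P a))
    (hsum : ∑ a, matToOp (P a) = 1) : IsPVM P where
  isStarProjection a :=
    ⟨matToOp_injective <| by rw [matToOp_mul]; exact hidem a,
      matToOp_injective <| by rw [matToOp_star]; exact hadj a⟩
  sum_eq_one := matToOp_injective <| by rw [matToOp_sum, hsum, matToOp_one]

lemma eq_of_sum_norm_sq_eq_re_sum_inner {ι H : Type*} [Fintype ι] [NormedAddCommGroup H]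
    [InnerProductSpace ℂ H] {v w : ι → H} {r : ℝ} (hv : ∑ t, ‖v t‖ ^ 2 = r)
    (hw : ∑ t, ‖w t‖ ^ 2 = r) (hvw : RCLike.re (∑ t, ⟪v t, w t⟫_ℂ) = r) : v = w := by
  have hsum : ∑ t, ‖v t - w t‖ ^ 2 = 0 := by
    simp only [norm_sub_sq (𝕜 := ℂ), Finset.sum_add_distrib, Finset.sum_sub_distrib,
      ← Finset.mul_sum, ← map_sum, hv, hw, hvw]
    ring
  funext t
  rw [Finset.sum_eq_zero_iff_of_nonneg fun _ _ => by positivity] at hsum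
  simpa [sub_eq_zero] using hsum t (Finset.mem_univ t)

/-- The conjugate of the paper's `∑ i j, ⟨P_{a,ij} Q_{b,ij} ψ, ψ⟩`, as Mathlib's inner product is
conjugate-linear in its first argument. -/
def correlation {ι κ H : Type*} [Fintype ι] [NormedAddCommGroup H] [InnerProductSpace ℂ H]
    (P Q : κ → Matrix ι ι (H →L[ℂ] H)) (ψ : H) (a b : κ) : ℂ :=
  ∑ i, ∑ j, ⟪ψ, P a i j (Q b i j ψ)⟫_ℂ

namespace IsPVM

section Matrix

variable {ι κ A : Type*} [Fintype ι] [DecidableEq ι] [Fintype κ] [Semiring A] [Star A]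
  {P : κ → Matrix ι ι A}

lemma star_apply (hP : IsPVM P) (a : κ) (i j : ι) : star (P a i j) = P a j i := by
  simpa using congrFun₂ (hP.isStarProjection a).isSelfAdjoint j i

lemma sum_mul_apply (hP : IsPVM P) (a : κ) (i k : ι) : ∑ j, P a i j * P a j k = P a i k := by
  simpa [Matrix.mul_apply] using congrFun₂ (hP.isStarProjection a).isIdempotentElem i k

lemma sum_apply (hP : IsPVM P) (i j : ι) : ∑ a, P a i j = if i = j then 1 else 0 := by
  simpa [Matrix.sum_apply, Matrix.one_apply] using congrFun₂ hP.sum_eq_one i j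

end Matrix

variable {ι κ H : Type*} [Fintype ι] [DecidableEq ι] [Fintype κ]
  [NormedAddCommGroup H] [InnerProductSpace ℂ H] [CompleteSpace H]
  {P Q : κ → Matrix ι ι (H →L[ℂ] H)}

lemma inner_apply_left (hP : IsPVM P) (a : κ) (i j : ι) (u w : H) :
    ⟪P a i j u, w⟫_ℂ = ⟪u, P a j i w⟫_ℂ := by
  rw [← hP.star_apply, ContinuousLinearMap.star_eq_adjoint,
    ContinuousLinearMap.adjoint_inner_left]

lemma sum_apply_apply (hP : IsPVM P) (i j : ι) (v : H) :
    ∑ a, P a i j v = if i = j then v else 0 := by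
  rw [← _root_.sum_apply, hP.sum_apply]
  split_ifs <;> rfl

lemma sum_norm_sq_apply (hP : IsPVM P) (ψ : H) :
    ∑ a, ∑ i, ∑ k, ‖P a i k ψ‖ ^ 2 = Fintype.card ι * ‖ψ‖ ^ 2 := by
  have hcol : ∀ a k, ∑ i, ‖P a i k ψ‖ ^ 2 = RCLike.re ⟪ψ, P a k k ψ⟫_ℂ := fun a k => by
    simp only [← inner_self_eq_norm_sq (𝕜 := ℂ), hP.inner_apply_left a _ k ψ, ← map_sum,
      ← inner_sum, ← mul_apply_eq_comp, ← _root_.sum_apply, hP.sum_mul_apply]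
  calc ∑ a, ∑ i, ∑ k, ‖P a i k ψ‖ ^ 2
      = ∑ k, RCLike.re ⟪ψ, ∑ a, P a k k ψ⟫_ℂ := by
        simp only [Finset.sum_comm (γ := ι), hcol, inner_sum, map_sum]
    _ = Fintype.card ι * ‖ψ‖ ^ 2 := by
        simp [hP.sum_apply_apply, ← inner_self_eq_norm_sq (𝕜 := ℂ)]

lemma sum_correlation (hP : IsPVM P) (hQ : IsPVM Q) (ψ : H) :
    ∑ a, ∑ b, correlation P Q ψ a b = Fintype.card ι * ⟪ψ, ψ⟫_ℂ := by
  have hentry : ∀ i j, ∑ a, ∑ b, ⟪ψ, P a i j (Q b i j ψ)⟫_ℂ = if i = j then ⟪ψ, ψ⟫_ℂ else 0 :=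
    fun i j => by
      simp only [← inner_sum, ← map_sum, hQ.sum_apply_apply, hP.sum_apply_apply]
      split_ifs <;> simp
  calc ∑ a, ∑ b, correlation P Q ψ a b
      = ∑ i, ∑ j, ∑ a, ∑ b, ⟪ψ, P a i j (Q b i j ψ)⟫_ℂ := by
        have hswap : ∀ g : κ → ι → ι → ℂ, ∑ a, ∑ i, ∑ j, g a i j = ∑ i, ∑ j, ∑ a, g a i j :=
          fun g => by rw [Finset.sum_comm]; exact Finset.sum_congr rfl fun i _ => Finset.sum_comm
        simp only [correlation]
        rw [Finset.sum_congr rfl fun a _ => hswap _, hswap]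
    _ = Fintype.card ι * ⟪ψ, ψ⟫_ℂ := by simp [hentry]

lemma sum_inner_apply_apply_of_synchronous (hP : IsPVM P) (hQ : IsPVM Q) {ψ : H}
    (hsync : ∀ a b, a ≠ b → correlation P Q ψ a b = 0) :
    ∑ a, ∑ i, ∑ k, ⟪P a i k ψ, Q a k i ψ⟫_ℂ = Fintype.card ι * ⟪ψ, ψ⟫_ℂ := by
  rw [← sum_correlation hP hQ]
  refine Finset.sum_congr rfl fun a _ => ?_
  rw [Finset.sum_eq_single a (fun b _ hb => hsync a b hb.symm) (by simp), correlation,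
    Finset.sum_comm]
  simp only [hP.inner_apply_left]

lemma apply_eq_apply_of_synchronous (hP : IsPVM P) (hQ : IsPVM Q) {ψ : H}
    (hsync : ∀ a b, a ≠ b → correlation P Q ψ a b = 0) (a : κ) (i k : ι) :
    P a i k ψ = Q a k i ψ := by
  have key := eq_of_sum_norm_sq_eq_re_sum_inner (v := fun t : κ × ι × ι => P t.1 t.2.1 t.2.2 ψ)
    (w := fun t => Q t.1 t.2.2 t.2.1 ψ) (r := Fintype.card ι * ‖ψ‖ ^ 2)
    (by simpa only [Fintype.sum_prod_type] using hP.sum_norm_sq_apply ψ)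
    (by
      simp only [Fintype.sum_prod_type]
      rw [← hQ.sum_norm_sq_apply ψ]
      exact Finset.sum_congr rfl fun a _ => Finset.sum_comm)
    (by simp [Fintype.sum_prod_type, sum_inner_apply_apply_of_synchronous hP hQ hsync,
      ← inner_self_eq_norm_sq (𝕜 := ℂ)])
  exact congrFun key (a, i, k)

lemma commute_of_mem_adjoin (hQ : IsPVM Q)
    (hcomm : ∀ a b i j k l, Commute (P a i j) (Q b k l)) {x : H →L[ℂ] H}
    (hx : x ∈ StarAlgebra.adjoin ℂ {T | ∃ a i j, T = P a i j}) (b : κ) (k l : ι) :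
    Commute x (Q b k l) := by
  have hle : StarAlgebra.adjoin ℂ {T | ∃ a i j, T = P a i j} ≤
      StarSubalgebra.centralizer ℂ {Q b k l} := by
    rw [StarAlgebra.adjoin_le_iff]
    rintro _ ⟨a, i, j, rfl⟩
    rw [SetLike.mem_coe, StarSubalgebra.mem_centralizer_iff]
    rintro _ rfl
    rw [hQ.star_apply]
    exact ⟨(hcomm a b i j k l).symm, (hcomm a b i j l k).symm⟩
  exact ((StarSubalgebra.mem_centralizer_iff ℂ).1 (hle hx) _ rfl).1.symm

lemma inner_mul_apply_comm_of_synchronous (hP : IsPVM P) (hQ : IsPVM Q)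
    (hcomm : ∀ a b i j k l, Commute (P a i j) (Q b k l)) {ψ : H}
    (hsync : ∀ a b, a ≠ b → correlation P Q ψ a b = 0) {x : H →L[ℂ] H}
    (hx : x ∈ StarAlgebra.adjoin ℂ {T | ∃ a i j, T = P a i j}) (a : κ) (i j : ι) :
    ⟪ψ, (x * P a i j) ψ⟫_ℂ = ⟪ψ, (P a i j * x) ψ⟫_ℂ := by
  have hPQ := apply_eq_apply_of_synchronous hP hQ hsync a
  calc ⟪ψ, (x * P a i j) ψ⟫_ℂ
      = ⟪ψ, (x * Q a j i) ψ⟫_ℂ := by rw [mul_apply_eq_comp, mul_apply_eq_comp, hPQ]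
    _ = ⟪ψ, Q a j i (x ψ)⟫_ℂ := by rw [(commute_of_mem_adjoin hQ hcomm hx a j i).eq,
        mul_apply_eq_comp]
    _ = ⟪P a j i ψ, x ψ⟫_ℂ := by rw [← hQ.inner_apply_left, hPQ]
    _ = ⟪ψ, (P a i j * x) ψ⟫_ℂ := hP.inner_apply_left a j i ψ (x ψ)

end IsPVM

lemma map_mul_comm_of_mem_adjoin {R A M : Type*} [CommSemiring R] [StarRing R] [Semiring A]
    [StarRing A] [Algebra R A] [StarModule R A] [AddCommMonoid M] [StarAddMonoid M]
    (f : A →+ M) (hf : ∀ z, f (star z) = star (f z)) {S : Set A}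
    (hS : ∀ x ∈ StarAlgebra.adjoin R S, ∀ s ∈ S, f (x * s) = f (s * x))
    {x y : A} (hx : x ∈ StarAlgebra.adjoin R S) (hy : y ∈ StarAlgebra.adjoin R S) :
    f (x * y) = f (y * x) := by
  induction hy using StarAlgebra.adjoin_induction generalizing x with
  | mem s hs => exact hS x hx s hs
  | algebraMap r => rw [Algebra.commutes]
  | add u v _ _ hu hv => rw [mul_add, add_mul, map_add, map_add, hu hx, hv hx]
  | mul u v hu' hv' hu hv =>
    rw [← mul_assoc, hv (mul_mem hx hu'), ← mul_assoc, hu (mul_mem hv' hx), mul_assoc]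
  | star u _ hu =>
    rw [← star_star x, ← star_mul, hf, ← hu (star_mem hx), ← hf, star_mul, star_star]

def vectorState {H : Type*} [NormedAddCommGroup H] [InnerProductSpace ℂ H] (ψ : H) :
    (H →L[ℂ] H) →+ ℂ :=
  AddMonoidHom.mk' (fun T => ⟪ψ, T ψ⟫_ℂ) fun S T => inner_add_right ψ (S ψ) (T ψ)

lemma vectorState_star {H : Type*} [NormedAddCommGroup H] [InnerProductSpace ℂ H]
    [CompleteSpace H] (ψ : H) (T : H →L[ℂ] H) :
    vectorState ψ (star T) = star (vectorState ψ T) := by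
  simp [vectorState, ContinuousLinearMap.star_eq_adjoint, ContinuousLinearMap.adjoint_inner_right]

theorem synchronous_gives_trace_general {H : Type*} [NormedAddCommGroup H]
    [InnerProductSpace ℂ H] [CompleteSpace H] (n c : ℕ)
    (P Q : Fin c → Matrix (Fin n) (Fin n) (H →L[ℂ] H))
    (hPadj : ∀ a, IsSelfAdjoint (matToOp (P a)))
    (hPidem : ∀ a, (matToOp (P a)).comp (matToOp (P a)) = matToOp (P a))
    (hPsum : ∑ a, matToOp (P a) = 1)
    (hQadj : ∀ b, IsSelfAdjoint (matToOp (Q b)))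
    (hQidem : ∀ b, (matToOp (Q b)).comp (matToOp (Q b)) = matToOp (Q b))
    (hQsum : ∑ b, matToOp (Q b) = 1)
    (hcomm : ∀ a b i j k l, (P a i j).comp (Q b k l) = (Q b k l).comp (P a i j))
    (ψ : H)
    (hsync : ∀ a b : Fin c, a ≠ b →
      ∑ i, ∑ j, (inner ℂ ψ ((P a i j) ((Q b i j) ψ)) : ℂ) = 0) :
    ∀ x y : H →L[ℂ] H,
      x ∈ StarAlgebra.adjoin ℂ {T : H →L[ℂ] H | ∃ a i j, T = P a i j} →
      y ∈ StarAlgebra.adjoin ℂ {T : H →L[ℂ] H | ∃ a i j, T = P a i j} →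
      (inner ℂ ψ ((x * y) ψ) : ℂ) = (inner ℂ ψ ((y * x) ψ) : ℂ) := by
  intro x y hx hy
  have hP := IsPVM.of_matToOp hPadj hPidem hPsum
  have hQ := IsPVM.of_matToOp hQadj hQidem hQsum
  refine map_mul_comm_of_mem_adjoin (vectorState ψ) (vectorState_star ψ) ?_ hx hy
  rintro z hz _ ⟨a, i, j, rfl⟩
  exact hP.inner_mul_apply_comm_of_synchronous hQ hcomm hsync hz a i j

/-- **Theorem (synchronicity condition, part 2).**  Let `{P_a}` and `{Q_b}` be PVMs with `c`
outputs in `M_n(B(H))` with mutually commuting entries and let `ψ ∈ H` be a unit vector such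
that the associated correlation is synchronous.  Then the vector state `ρ(T) = ⟨T ψ, ψ⟩` is
tracial on the *-subalgebra of `B(H)` generated by the entries
`{P_{a,ij} : 1 ≤ a ≤ c, 1 ≤ i,j ≤ n}`: for all `x, y` in that *-subalgebra,
`⟨xy ψ, ψ⟩ = ⟨yx ψ, ψ⟩`. -/
theorem synchronous_gives_trace {H : Type*} [NormedAddCommGroup H]
    [InnerProductSpace ℂ H] [CompleteSpace H] (n c : ℕ)
    (P Q : Fin c → Matrix (Fin n) (Fin n) (H →L[ℂ] H))
    (hPadj : ∀ a, IsSelfAdjoint (matToOp (P a)))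
    (hPidem : ∀ a, (matToOp (P a)).comp (matToOp (P a)) = matToOp (P a))
    (hPsum : ∑ a, matToOp (P a) = 1)
    (hQadj : ∀ b, IsSelfAdjoint (matToOp (Q b)))
    (hQidem : ∀ b, (matToOp (Q b)).comp (matToOp (Q b)) = matToOp (Q b))
    (hQsum : ∑ b, matToOp (Q b) = 1)
    (hcomm : ∀ a b i j k l, (P a i j).comp (Q b k l) = (Q b k l).comp (P a i j))
    (ψ : H) (hψ : ‖ψ‖ = 1)
    (hsync : ∀ a b : Fin c, a ≠ b →
      ∑ i, ∑ j, (inner ℂ ψ ((P a i j) ((Q b i j) ψ)) : ℂ) = 0) :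
    ∀ x y : H →L[ℂ] H,
      x ∈ StarAlgebra.adjoin ℂ {T : H →L[ℂ] H | ∃ a i j, T = P a i j} →
      y ∈ StarAlgebra.adjoin ℂ {T : H →L[ℂ] H | ∃ a i j, T = P a i j} →
      (inner ℂ ψ ((x * y) ψ) : ℂ) = (inner ℂ ψ ((y * x) ψ) : ℂ) :=
  synchronous_gives_trace_general n c P Q hPadj hPidem hPsum hQadj hQidem hQsum hcomm ψ hsync
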